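/- Let 𝒜 be an abelian category with enough projectives. Then 𝒜 is hereditary (every object has projective dimension at most 1) if and only if for all objects A, B of 𝒜, every augmented projective resolution P_B of B, and every n ≥ 1, one has H^{-n} Hom_𝒜(A, P_B) = 0. -/

import Mathlib

open CategoryTheory Limits ZeroObject

universe v u

variable {A : Type u} [Category.{v} A] [Abelian A]

/-- An augmented projective resolution of `B` : a cochain complex
`⋯ → P^{-2} → P^{-1} → B → 0` concentrated in degrees `≤ 0`, with `B` in degree `0`,
projective terms in negative degrees, which is exact (acyclic). -/
structure IsAugmentedProjResolution (B : A) (C : CochainComplex A ℤ) where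
  degZeroIso : C.X 0 ≅ B
  isZero_of_pos : ∀ i : ℤ, 0 < i → Limits.IsZero (C.X i)
  projective : ∀ i : ℤ, i < 0 → Projective (C.X i)
  exactAt : ∀ n : ℤ, C.ExactAt n

/-- `B` has projective dimension at most `n` : there is an exact complex
`0 → Q^{-(n+1)} → ⋯ → Q^{-1} → B → 0` with all the `Q^{-i}` projective, i.e. an
augmented projective resolution vanishing in degrees `< -(n+1)`. For `n = 0` this
means exactly that `B` is projective. -/
def HasProjDimLE (B : A) (n : ℕ) : Prop :=
  ∃ C : CochainComplex A ℤ, Nonempty (IsAugmentedProjResolution B C) ∧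
    ∀ i : ℤ, i < -(n + 1 : ℤ) → Limits.IsZero (C.X i)

/-- The `n`-th syzygy `Ω^n(B)` of `B` with respect to an augmented projective resolution
`P_B`, with `Ω^0(B) = B` and `Ω^n(B) = Ker(P^{-n} → P^{-n+1})` for `n ≥ 1`. -/
noncomputable def syzygy (B : A) (C : CochainComplex A ℤ) : ℕ → A
  | 0 => B
  | (n + 1) => kernel (C.d (-(n + 1 : ℤ)) (-(n + 1 : ℤ) + 1))

/-- The subgroup of `Hom_𝒜(a, b)` of morphisms factoring through a projective object. -/
def projFactorSubgroup (a b : A) : AddSubgroup (a ⟶ b) where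
  carrier := {f | ∃ (T : A) (_ : Projective T) (u : a ⟶ T) (v : T ⟶ b), u ≫ v = f}
  zero_mem' := ⟨0, inferInstance, 0, 0, by simp⟩
  add_mem' := by
    rintro f g ⟨T, hT, u, v, rfl⟩ ⟨T', hT', u', v', rfl⟩
    haveI := hT
    haveI := hT'
    exact ⟨T ⊞ T', inferInstance, biprod.lift u u', biprod.desc v v', by simp⟩
  neg_mem' := by
    rintro f ⟨T, hT, u, v, rfl⟩
    exact ⟨T, hT, -u, v, by simp⟩


set_option linter.unusedSectionVars false

lemma projective_of_retract {K Z : A} (i : K ⟶ Z) (r : Z ⟶ K) (h : i ≫ r = 𝟙 K)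
    [Projective Z] : Projective K where
  factors f e he := ⟨i ≫ Projective.factorThru (r ≫ f) e, by
    rw [Category.assoc, Projective.factorThru_comp, ← Category.assoc, h, Category.id_comp]⟩

lemma projective_of_splitEpi {Z Q : A} (p : Z ⟶ Q) (s : Q ⟶ Z) (hs : s ≫ p = 𝟙 Q)
    [Projective Q] [Projective (kernel p)] : Projective Z where
  factors f e he := by
    refine ⟨kernel.lift p (𝟙 Z - p ≫ s) (by simp [hs]) ≫
      Projective.factorThru (kernel.ι p ≫ f) e + p ≫ Projective.factorThru (s ≫ f) e, ?_⟩
    simp [Preadditive.add_comp, Category.assoc, Projective.factorThru_comp]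

/-- the canonical map `kernel g ⟶ pullback f g` is a kernel of `pullback.fst f g`. -/
noncomputable def kernelPullbackFstIsKernel {X Y Z : A} (f : X ⟶ Z) (g : Y ⟶ Z) :
    IsLimit (KernelFork.ofι (pullback.lift (0 : kernel g ⟶ X) (kernel.ι g) (by simp))
      (by simp [pullback.lift_fst] : pullback.lift (0 : kernel g ⟶ X) (kernel.ι g) (by simp) ≫ pullback.fst f g = 0)) := by
  refine KernelFork.IsLimit.ofι _ _ (fun u hu => ?_) (fun u hu => ?_) (fun u hu m hm => ?_)
  · exact kernel.lift g (u ≫ pullback.snd f g) (by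
      rw [Category.assoc, ← pullback.condition, ← Category.assoc, hu, zero_comp])
  · apply pullback.hom_ext <;> simp [hu, pullback.lift_fst, pullback.lift_snd]
  · apply (cancel_mono (kernel.ι g)).1
    simpa [pullback.lift_snd] using congrArg (· ≫ pullback.snd f g) hm

noncomputable def kernelPullbackFstIso {X Y Z : A} (f : X ⟶ Z) (g : Y ⟶ Z) :
    kernel (pullback.fst f g) ≅ kernel g :=
  IsLimit.conePointUniqueUpToIso (kernelIsKernel _) (kernelPullbackFstIsKernel f g)

noncomputable def kernelPullbackSndIso {X Y Z : A} (f : X ⟶ Z) (g : Y ⟶ Z) :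
    kernel (pullback.snd f g) ≅ kernel f :=
  kernelIsoOfEq (by simp : pullback.snd f g =
      (pullbackSymmetry f g).hom ≫ pullback.fst g f) ≪≫
    kernelIsIsoComp (pullbackSymmetry f g).hom (pullback.fst g f) ≪≫
    kernelPullbackFstIso g f

lemma projective_kernel_of_epi (h : ∀ B : A, HasProjDimLE B 1) {Q X : A} [Projective Q]
    (e : Q ⟶ X) [Epi e] : Projective (kernel e) := by
  obtain ⟨C, ⟨hC⟩, hv⟩ := h X
  have hQ1 : Projective (C.X (-1)) := hC.projective _ (by norm_num)
  have hQ2 : Projective (C.X (-2)) := hC.projective _ (by norm_num)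
  -- epi q : C.X (-1) ⟶ X
  have h0 : (C.sc' (-1) 0 1).Exact :=
    (C.exactAt_iff' (-1) 0 1 (by simp) (by simp)).1 (hC.exactAt 0)
  have epi_d : Epi (C.d (-1) 0) := (ShortComplex.exact_iff_epi _
    ((hC.isZero_of_pos 1 one_pos).eq_zero_of_tgt _)).1 h0
  set q : C.X (-1) ⟶ X := C.d (-1) 0 ≫ hC.degZeroIso.hom with hq
  have epi_q : Epi q := epi_comp _ _
  -- mono m : C.X (-2) ⟶ C.X (-1)
  have h2 : (C.sc' (-3) (-2) (-1)).Exact :=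
    (C.exactAt_iff' (-3) (-2) (-1) (by simp) (by simp)).1 (hC.exactAt (-2))
  have mono_m : Mono (C.d (-2) (-1)) := (ShortComplex.exact_iff_mono _
    ((hv (-3) (by norm_num)).eq_zero_of_src _)).1 h2
  -- C.X (-2) is a kernel of C.d (-1) 0
  have h1 : (C.sc' (-2) (-1) 0).Exact :=
    (C.exactAt_iff' (-2) (-1) 0 (by simp) (by simp)).1 (hC.exactAt (-1))
  have : Mono (C.sc' (-2) (-1) 0).f := mono_m
  have projkq : Projective (kernel q) := Projective.of_iso
    ((IsLimit.conePointUniqueUpToIso h1.fIsKernel (kernelIsKernel (C.d (-1) 0))) ≪≫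
      (kernelCompMono (C.d (-1) 0) hC.degZeroIso.hom).symm) hQ2
  -- pullback
  have projk1 : Projective (kernel (pullback.fst e q)) :=
    Projective.of_iso (kernelPullbackFstIso e q).symm projkq
  have hs1 : Projective.factorThru (𝟙 Q) (pullback.fst e q) ≫ pullback.fst e q = 𝟙 Q :=
    Projective.factorThru_comp _ _
  have hZ : Projective (pullback e q) := projective_of_splitEpi _ _ hs1
  set s2 : C.X (-1) ⟶ pullback e q := Projective.factorThru (𝟙 _) (pullback.snd e q) with hs2
  have projk2 : Projective (kernel (pullback.snd e q)) := by
    refine projective_of_retract (kernel.ι _)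
      (kernel.lift _ (𝟙 _ - pullback.snd e q ≫ s2) (by simp [hs2])) ?_
    apply (cancel_mono (kernel.ι (pullback.snd e q))).1
    simp
  exact Projective.of_iso (kernelPullbackSndIso e q) projk2

lemma projective_kernel_of_proj (h : ∀ B : A, HasProjDimLE B 1) {Q X : A} [Projective Q]
    (f : Q ⟶ X) : Projective (kernel f) := by
  have : Projective (kernel (factorThruImage f)) :=
    projective_kernel_of_epi h (factorThruImage f)
  exact Projective.of_iso ((kernelCompMono (factorThruImage f) (image.ι f)).symm ≪≫
    kernelIsoOfEq (image.fac f)) this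

lemma forward_dir (h : ∀ B : A, HasProjDimLE B 1) (A₀ B : A) (P : CochainComplex A ℤ)
    (hP : IsAugmentedProjResolution B P) (n : ℕ) (hn : 1 ≤ n) :
    Limits.IsZero ((((preadditiveCoyoneda.obj (Opposite.op A₀)).mapHomologicalComplex
      (ComplexShape.up ℤ)).obj P).homology (-(n : ℤ))) := by
  rw [← HomologicalComplex.exactAt_iff_isZero_homology,
    HomologicalComplex.exactAt_iff' _ (-(n:ℤ)-1) (-(n:ℤ)) (-(n:ℤ)+1) (by simp) (by simp),
    ShortComplex.ab_exact_iff]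
  intro (x : A₀ ⟶ P.X (-(n:ℤ))) hx
  have hx' : x ≫ P.d (-(n:ℤ)) (-(n:ℤ)+1) = 0 := hx
  haveI : Projective (P.X (-(n:ℤ))) := hP.projective _ (by omega)
  haveI hK : Projective (kernel (P.d (-(n:ℤ)) (-(n:ℤ)+1))) :=
    projective_kernel_of_proj h _
  have hE : (P.sc' (-(n:ℤ)-1) (-(n:ℤ)) (-(n:ℤ)+1)).Exact :=
    (P.exactAt_iff' (-(n:ℤ)-1) (-(n:ℤ)) (-(n:ℤ)+1) (by simp) (by simp)).1
      (hP.exactAt (-(n:ℤ)))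
  have epiπ : Epi (kernel.lift (P.d (-(n:ℤ)) (-(n:ℤ)+1)) (P.d (-(n:ℤ)-1) (-(n:ℤ)))
      (P.d_comp_d _ _ _)) := (ShortComplex.exact_iff_epi_kernel_lift _).1 hE
  set π := kernel.lift (P.d (-(n:ℤ)) (-(n:ℤ)+1)) (P.d (-(n:ℤ)-1) (-(n:ℤ))) (P.d_comp_d _ _ _)
  refine ⟨kernel.lift _ x hx' ≫ Projective.factorThru (𝟙 _) π, ?_⟩
  show (kernel.lift _ x hx' ≫ Projective.factorThru (𝟙 _) π) ≫ P.d (-(n:ℤ)-1) (-(n:ℤ)) = x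
  rw [← kernel.lift_ι (P.d (-(n:ℤ)) (-(n:ℤ)+1)) (P.d (-(n:ℤ)-1) (-(n:ℤ))) (P.d_comp_d _ _ _)]
  rw [← Category.assoc, Category.assoc _ _ π, Projective.factorThru_comp, Category.comp_id,
    kernel.lift_ι]

section Construction
variable [EnoughProjectives A]

/-- The syzygy objects of the standard resolution. -/
@[reducible]
noncomputable def resObj (B : A) : ℕ → A
  | 0 => B
  | n + 1 => kernel (Projective.π (resObj B n))

/-- Objects of the standard augmented resolution. -/
noncomputable def augX (B : A) : ℤ → A
  | .ofNat 0 => B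
  | .ofNat (_ + 1) => 0
  | .negSucc k => Projective.over (resObj B k)

/-- Differentials of the standard augmented resolution. -/
noncomputable def augD (B : A) : ∀ n : ℤ, augX B n ⟶ augX B (n + 1)
  | .ofNat _ => 0
  | .negSucc 0 => Projective.π B
  | .negSucc (k + 1) =>
      Projective.π (resObj B (k + 1)) ≫ kernel.ι (Projective.π (resObj B k))

lemma augD_comp (B : A) : ∀ n : ℤ, augD B n ≫ augD B (n + 1) = 0 := by
  rintro (m | (_ | k))
  · exact zero_comp
  · exact comp_zero
  · show (Projective.π (resObj B (k + 1)) ≫ kernel.ι (Projective.π (resObj B k))) ≫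
      augD B (Int.negSucc k) = 0
    cases k with
    | zero =>
      show (Projective.π (resObj B 1) ≫ kernel.ι (Projective.π (resObj B 0))) ≫
        Projective.π (resObj B 0) = 0
      simp
    | succ m => exact (Category.assoc _ _ _).trans ((congrArg (Projective.π (resObj B (m + 2)) ≫ ·) (kernel.condition_assoc _ _)).trans ((congrArg (Projective.π (resObj B (m + 2)) ≫ ·) zero_comp).trans comp_zero))

/-- The standard augmented projective resolution of `B`. -/
noncomputable def augRes (B : A) : CochainComplex A ℤ :=
  CochainComplex.of (augX B) (augD B) (augD_comp B)

lemma augRes_d_neg_one (B : A) : (augRes B).d (-1) 0 = Projective.π B :=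
  CochainComplex.of_d (augX B) (augD B) (Int.negSucc 0)

lemma augRes_d_negSucc (B : A) (k : ℕ) :
    (augRes B).d (-((k : ℤ) + 2)) (-((k : ℤ) + 1)) =
      Projective.π (resObj B (k + 1)) ≫ kernel.ι (Projective.π (resObj B k)) :=
  CochainComplex.of_d (augX B) (augD B) (Int.negSucc (k + 1))

end Construction

lemma epi_lift_of_comp_mono {P K Y Z : A} (p : P ⟶ K) [Epi p] (g : Y ⟶ Z)
    (i : K ⟶ Y) (hi : i ≫ g = 0) (f : P ⟶ Y) (hf : f = p ≫ i)
    (w : f ≫ g = 0) (hlim : IsLimit (KernelFork.ofι i hi)) :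
    Epi (kernel.lift g f w) := by
  have heq : kernel.lift g f w =
      p ≫ (IsLimit.conePointUniqueUpToIso hlim (kernelIsKernel g)).hom := by
    apply (cancel_mono (kernel.ι g)).1
    rw [kernel.lift_ι, Category.assoc, hf]
    congr 1
    exact (IsLimit.conePointUniqueUpToIso_hom_comp hlim (kernelIsKernel g)
      WalkingParallelPair.zero).symm
  rw [heq]
  exact epi_comp _ _

section Construction2
variable [EnoughProjectives A]

lemma augRes_d_neg_two (B : A) : (augRes B).d (-2) (-1) =
    Projective.π (resObj B 1) ≫ kernel.ι (Projective.π (resObj B 0)) :=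
  CochainComplex.of_d (augX B) (augD B) (Int.negSucc 1)

lemma augSC_exact (B : A) (m : ℕ) :
    (ShortComplex.mk (augD B (Int.negSucc (m + 1))) (augD B (Int.negSucc m))
      (augD_comp B (Int.negSucc (m + 1)))).Exact := by
  rw [ShortComplex.exact_iff_epi_kernel_lift]
  cases m with
  | zero =>
    exact epi_lift_of_comp_mono (Projective.π (resObj B 1))
      (Projective.π (resObj B 0)) (kernel.ι (Projective.π (resObj B 0)))
      (kernel.condition (Projective.π (resObj B 0))) _ rfl _
      (kernelIsKernel (Projective.π (resObj B 0)))
  | succ m =>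
    exact epi_lift_of_comp_mono (Projective.π (resObj B (m + 2)))
      (Projective.π (resObj B (m + 1)) ≫ kernel.ι (Projective.π (resObj B m)))
      (kernel.ι (Projective.π (resObj B (m + 1))))
      (by rw [kernel.condition_assoc, zero_comp]) _ rfl _
      (isKernelCompMono (kernelIsKernel (Projective.π (resObj B (m + 1))))
        (kernel.ι (Projective.π (resObj B m))) rfl)

lemma augRes_exactAt (B : A) (n : ℤ) : (augRes B).ExactAt n := by
  rcases lt_trichotomy n 0 with hn | rfl | hn
  · obtain ⟨m, rfl⟩ : ∃ m : ℕ, n = -((m : ℤ) + 1) := ⟨(-n - 1).toNat, by omega⟩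
    rw [(augRes B).exactAt_iff' (-((m : ℤ) + 2)) (-((m : ℤ) + 1)) (-((m : ℤ) + 1) + 1)
      (by rw [CochainComplex.prev ℤ]; omega) (by rw [CochainComplex.next ℤ])]
    refine ShortComplex.exact_of_iso ?_ (augSC_exact B m)
    refine ShortComplex.isoMk (Iso.refl _) (Iso.refl _) (Iso.refl _) ?_ ?_
    · rw [Iso.refl_hom, Iso.refl_hom]; erw [Category.id_comp, Category.comp_id]
      exact CochainComplex.of_d (augX B) (augD B) (Int.negSucc (m + 1))
    · rw [Iso.refl_hom, Iso.refl_hom]; erw [Category.id_comp, Category.comp_id]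
      exact CochainComplex.of_d (augX B) (augD B) (Int.negSucc m)
  · rw [(augRes B).exactAt_iff' (-1) 0 1 (by rw [CochainComplex.prev ℤ]; omega)
      (by rw [CochainComplex.next ℤ]; omega)]
    rw [ShortComplex.exact_iff_epi _ (IsZero.eq_zero_of_tgt (isZero_zero A) _)]
    show Epi ((augRes B).d (-1) 0)
    rw [augRes_d_neg_one]
    exact Projective.π_epi B
  · obtain ⟨m, rfl⟩ : ∃ m : ℕ, n = (m : ℤ) + 1 := ⟨(n - 1).toNat, by omega⟩
    rw [(augRes B).exactAt_iff' (m : ℤ) ((m : ℤ) + 1) ((m : ℤ) + 2)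
      (by rw [CochainComplex.prev ℤ]; omega) (by rw [CochainComplex.next ℤ]; omega)]
    exact ShortComplex.exact_of_isZero_X₂ _ (isZero_zero A)

end Construction2

lemma projective_of_isZero {X : A} (h : IsZero X) : Projective X :=
  ⟨fun f _ _ => ⟨0, by rw [zero_comp, h.eq_zero_of_src f]⟩⟩

section Construction3
variable [EnoughProjectives A]

/-- `augRes B` is an augmented projective resolution. -/
noncomputable def augRes_isRes (B : A) : IsAugmentedProjResolution B (augRes B) where
  degZeroIso := Iso.refl B
  isZero_of_pos i hi := by
    obtain ⟨m, rfl⟩ : ∃ m : ℕ, i = ((m : ℤ) + 1) := ⟨(i - 1).toNat, by omega⟩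
    exact isZero_zero A
  projective i hi := by
    obtain ⟨m, rfl⟩ : ∃ m : ℕ, i = -((m : ℤ) + 1) := ⟨(-i - 1).toNat, by omega⟩
    show Projective (Projective.over (resObj B m))
    infer_instance
  exactAt := augRes_exactAt B

/-- Objects of the length-one resolution. -/
noncomputable def threeX (B : A) : ℤ → A
  | .ofNat 0 => B
  | .negSucc 0 => Projective.over B
  | .negSucc 1 => kernel (Projective.π B)
  | _ => 0

/-- Differentials of the length-one resolution. -/
noncomputable def threeD (B : A) : ∀ n : ℤ, threeX B n ⟶ threeX B (n + 1)
  | .ofNat _ => 0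
  | .negSucc 0 => Projective.π B
  | .negSucc 1 => kernel.ι (Projective.π B)
  | .negSucc (_ + 2) => 0

lemma threeD_comp (B : A) : ∀ n : ℤ, threeD B n ≫ threeD B (n + 1) = 0 := by
  rintro (m | (_ | (_ | k)))
  · exact zero_comp
  · exact comp_zero
  · exact kernel.condition _
  · exact zero_comp

/-- The length-one resolution of `B`, when the first syzygy of `B` is projective. -/
noncomputable def threeRes (B : A) : CochainComplex A ℤ :=
  CochainComplex.of (threeX B) (threeD B) (threeD_comp B)

lemma threeRes_d_neg_one (B : A) : (threeRes B).d (-1) 0 = Projective.π B :=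
  CochainComplex.of_d (threeX B) (threeD B) (Int.negSucc 0)

lemma threeRes_d_neg_two (B : A) : (threeRes B).d (-2) (-1) = kernel.ι (Projective.π B) :=
  CochainComplex.of_d (threeX B) (threeD B) (Int.negSucc 1)

lemma threeRes_isZero (B : A) (i : ℤ) (hi : i < -2) : IsZero ((threeRes B).X i) := by
  obtain ⟨m, rfl⟩ : ∃ m : ℕ, i = Int.negSucc (m + 2) := ⟨(-i - 3).toNat, by rw [Int.negSucc_eq]; push_cast; omega⟩
  exact isZero_zero A

lemma threeRes_isZero_pos (B : A) (i : ℤ) (hi : 0 < i) : IsZero ((threeRes B).X i) := by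
  obtain ⟨m, rfl⟩ : ∃ m : ℕ, i = ((m : ℤ) + 1) := ⟨(i - 1).toNat, by omega⟩
  exact isZero_zero A

/-- `threeRes B` is an augmented projective resolution (given projectivity of the syzygy). -/
noncomputable def threeRes_isRes (B : A) [hK : Projective (kernel (Projective.π B))] :
    IsAugmentedProjResolution B (threeRes B) where
  degZeroIso := Iso.refl B
  isZero_of_pos := threeRes_isZero_pos B
  projective i hi := by
    match i, hi with
    | .negSucc 0, _ => exact (inferInstance : Projective (Projective.over B))
    | .negSucc 1, _ => exact hK
    | .negSucc (k + 2), _ => exact projective_of_isZero (isZero_zero A)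
  exactAt n := by
    rcases lt_trichotomy n (-1) with hn | rfl | hn
    · rcases lt_trichotomy n (-2) with hn2 | rfl | hn2
      · rw [(threeRes B).exactAt_iff' (n - 1) n (n + 1)
          (by rw [CochainComplex.prev ℤ]) (by rw [CochainComplex.next ℤ])]
        exact ShortComplex.exact_of_isZero_X₂ _ (threeRes_isZero B n hn2)
      · rw [(threeRes B).exactAt_iff' (-3) (-2) (-1)
          (by rw [CochainComplex.prev ℤ]; omega) (by rw [CochainComplex.next ℤ]; omega)]
        rw [ShortComplex.exact_iff_mono _ ((threeRes_isZero B (-3) (by omega)).eq_zero_of_src _)]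
        show Mono ((threeRes B).d (-2) (-1))
        rw [threeRes_d_neg_two]
        exact (inferInstance : Mono (kernel.ι (Projective.π B)))
      · omega
    · rw [(threeRes B).exactAt_iff' (-2) (-1) (-1 + 1)
        (by rw [CochainComplex.prev ℤ]; omega) (by rw [CochainComplex.next ℤ])]
      refine ShortComplex.exact_of_iso ?_
        (?_ : (ShortComplex.mk (kernel.ι (Projective.π B)) (Projective.π B)
          (kernel.condition _)).Exact)
      · refine ShortComplex.isoMk (Iso.refl _) (Iso.refl _) (Iso.refl _) ?_ ?_
        · rw [Iso.refl_hom, Iso.refl_hom]; erw [Category.id_comp, Category.comp_id]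
          exact threeRes_d_neg_two B
        · rw [Iso.refl_hom, Iso.refl_hom]; erw [Category.id_comp, Category.comp_id]
          exact CochainComplex.of_d (threeX B) (threeD B) (Int.negSucc 0)
      · rw [ShortComplex.exact_iff_epi_kernel_lift]
        exact epi_lift_of_comp_mono (𝟙 _) (Projective.π B) (kernel.ι (Projective.π B))
          (kernel.condition _) _ (Category.id_comp _).symm _
          (kernelIsKernel (Projective.π B))
    · rcases lt_trichotomy n 0 with hn0 | rfl | hn0
      · omega
      · rw [(threeRes B).exactAt_iff' (-1) 0 1 (by rw [CochainComplex.prev ℤ]; omega)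
          (by rw [CochainComplex.next ℤ]; omega)]
        rw [ShortComplex.exact_iff_epi _
          ((threeRes_isZero_pos B 1 (by omega)).eq_zero_of_tgt _)]
        show Epi ((threeRes B).d (-1) 0)
        rw [threeRes_d_neg_one]
        exact Projective.π_epi B
      · rw [(threeRes B).exactAt_iff' (n - 1) n (n + 1)
          (by rw [CochainComplex.prev ℤ]) (by rw [CochainComplex.next ℤ])]
        exact ShortComplex.exact_of_isZero_X₂ _ (threeRes_isZero_pos B n hn0)

end Construction3

lemma backward_dir [EnoughProjectives A]
    (h : ∀ (A₀ B : A) (P : CochainComplex A ℤ), IsAugmentedProjResolution B P →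
      ∀ n : ℕ, 1 ≤ n →
        Limits.IsZero ((((preadditiveCoyoneda.obj (Opposite.op A₀)).mapHomologicalComplex
          (ComplexShape.up ℤ)).obj P).homology (-(n : ℤ))))
    (B : A) : HasProjDimLE B 1 := by
  have hz := h (kernel (Projective.π B)) B (augRes B) (augRes_isRes B) 1 le_rfl
  rw [← HomologicalComplex.exactAt_iff_isZero_homology,
    HomologicalComplex.exactAt_iff' _ (-2) (-((1 : ℕ) : ℤ)) (-((1 : ℕ) : ℤ) + 1)
      (by rw [CochainComplex.prev ℤ]; omega) (by rw [CochainComplex.next ℤ]),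
    ShortComplex.ab_exact_iff] at hz
  have hx : kernel.ι (Projective.π B) ≫ (augRes B).d (-1) (-1 + 1) = 0 := by
    have : (augRes B).d (-1) (-1 + 1) = Projective.π B :=
      CochainComplex.of_d (augX B) (augD B) (Int.negSucc 0)
    rw [this]; exact kernel.condition _
  obtain ⟨ψ, hψ⟩ := hz (kernel.ι (Projective.π B)) hx
  let ψ' : kernel (Projective.π (resObj B 0)) ⟶ Projective.over (resObj B 1) := ψ
  have h2 : ψ' ≫ (augRes B).d (-2) (-1) = kernel.ι (Projective.π B) := hψ
  rw [augRes_d_neg_two] at h2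
  have h3 : ψ' ≫ Projective.π (resObj B 1) = 𝟙 (kernel (Projective.π (resObj B 0))) := by
    apply (cancel_mono (kernel.ι (Projective.π (resObj B 0)))).1
    rw [Category.assoc]; erw [h2]
    exact (Category.id_comp (kernel.ι (Projective.π (resObj B 0)))).symm
  haveI : Projective (kernel (Projective.π B)) :=
    projective_of_retract ψ' (Projective.π (resObj B 1)) h3
  exact ⟨threeRes B, ⟨threeRes_isRes B⟩, fun i hi => threeRes_isZero B i (by omega)⟩


/-- Example 2.5 (consequence): an abelian category `𝒜` with enough projectives is
hereditary (every object has projective dimension at most `1`) if and only if for all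
objects `A₀`, `B`, every augmented projective resolution `P_B` of `B` and every `n ≥ 1`,
`H^{-n} Hom_𝒜(A₀, P_B) = 0`. -/
theorem hereditary_iff_lowerExt_vanishing [EnoughProjectives A] :
    (∀ B : A, HasProjDimLE B 1) ↔
      (∀ (A₀ B : A) (P : CochainComplex A ℤ), IsAugmentedProjResolution B P →
        ∀ n : ℕ, 1 ≤ n →
          Limits.IsZero ((((preadditiveCoyoneda.obj (Opposite.op A₀)).mapHomologicalComplex
            (ComplexShape.up ℤ)).obj P).homology (-(n : ℤ)))) :=
  ⟨fun h A₀ B P hP n hn => forward_dir h A₀ B P hP n hn, fun h B => backward_dir h B⟩
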